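/- Fix a measurable partition A_1, …, A_ρ of ℝ^d and set k = ρ·(d(d+1)/2 + 1). There exist a measurable map T : ℝ^d → ℝ^k and the function h(x) = (2π)^{-d/2}, not depending on any precision matrices, such that for every choice of positive definite real d×d matrices K_1, …, K_ρ and every Z > 0 there are η ∈ ℝ^k and ψ ∈ ℝ with the property that the piecewise Gaussian density g(x) = (1/Z) ∑_{r=1}^{ρ} f_{K_r}(x) 1_{A_r}(x) satisfies g(x) = h(x) exp(⟨η, T(x)⟩ - ψ) for all x ∈ ℝ^d. -/

import Mathlib

/-!
On each piece `A r` the log-density of `f_{K r}` is, up to the constant `-(d/2) log 2π`,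
a linear function of the monomials `x i * x j` (one per unordered pair `{i, j}`) and of the
constant `1`, with coefficients read off from `K r` and `log √(det K r)`. Multiplying this
statistic by `1_{A r}` and concatenating over `r` gives `ρ (d(d+1)/2 + 1)` coordinates; since
exactly one indicator is nonzero at each `x`, `⟨η, T x⟩` is the exponent on the piece
containing `x`, and the normalisation `Z` is absorbed into `ψ = log Z`.
-/

open MeasureTheory Matrix Real Set

/-- The centered Gaussian density with precision matrix `K`:
`f_K(x) = (2π)^(-d/2) * (det K)^(1/2) * exp(-(1/2) xᵀ K x)`. -/
noncomputable def gaussianDensityPrec {d : ℕ} (K : Matrix (Fin d) (Fin d) ℝ)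
    (x : Fin d → ℝ) : ℝ :=
  (2 * π) ^ (-(d : ℝ) / 2) * Real.sqrt K.det *
    Real.exp (-(1 / 2) * (x ⬝ᵥ K.mulVec x))

section Piecewise

variable {X σ ι : Type*} {A : σ → Set X}

theorem sum_indicator_eq_of_mem [Fintype σ] {M : Type*} [AddCommMonoid M]
    (hA : Pairwise (Function.onFun Disjoint A)) {r₀ : σ} {x : X} (hx : x ∈ A r₀)
    (g : σ → X → M) : ∑ r, (A r).indicator (g r) x = g r₀ x := by
  classical
  rw [Finset.sum_eq_single r₀ (fun r _ hr => indicator_of_notMem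
    (fun hxr => (hA hr).le_bot ⟨hxr, hx⟩) _) (by simp), indicator_of_mem hx]

noncomputable def piecewiseStat (A : σ → Set X) (t : X → ι → ℝ) (x : X) : σ × ι → ℝ :=
  fun p => (A p.1).indicator (t · p.2) x

theorem measurable_piecewiseStat [MeasurableSpace X] (hA : ∀ r, MeasurableSet (A r))
    {t : X → ι → ℝ} (ht : Measurable t) : Measurable (piecewiseStat A t) :=
  measurable_pi_lambda _ fun p => ((measurable_pi_apply p.2).comp ht).indicator (hA p.1)

theorem uncurry_dotProduct_piecewiseStat [Fintype σ] [Fintype ι] (θ : σ → ι → ℝ)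
    (t : X → ι → ℝ) (x : X) :
    Function.uncurry θ ⬝ᵥ piecewiseStat A t x =
      ∑ r, (A r).indicator (fun y => θ r ⬝ᵥ t y) x := by
  simp only [dotProduct, Fintype.sum_prod_type, Function.uncurry_apply_pair, piecewiseStat]
  refine Finset.sum_congr rfl fun r _ => ?_
  by_cases hx : x ∈ A r <;> simp [hx]

theorem sum_indicator_mul_exp_dotProduct [Fintype σ] [Fintype ι]
    (hA : Pairwise (Function.onFun Disjoint A)) (hcover : ⋃ r, A r = univ) (h : X → ℝ)
    (θ : σ → ι → ℝ) (t : X → ι → ℝ) (x : X) :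
    ∑ r, (A r).indicator (fun y => h y * exp (θ r ⬝ᵥ t y)) x =
      h x * exp (Function.uncurry θ ⬝ᵥ piecewiseStat A t x) := by
  obtain ⟨r₀, hx⟩ := mem_iUnion.mp (hcover ▸ mem_univ x)
  rw [uncurry_dotProduct_piecewiseStat, sum_indicator_eq_of_mem hA hx,
    sum_indicator_eq_of_mem hA hx]

end Piecewise

section Sym2Coeff

variable {n R : Type*} [Fintype n] [DecidableEq n] [CommSemiring R]

/-- The coefficient of `x i * x j` in `xᵀ K x`: `K i i` if `i = j`, else `K i j + K j i`. -/
def sym2Coeff (K : Matrix n n R) (z : Sym2 n) : R :=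
  ∑ p : n × n with s(p.1, p.2) = z, K p.1 p.2

theorem sum_sym2Coeff_mul (K : Matrix n n R) (x : n → R) :
    ∑ z, sym2Coeff K z * (z.map x).mul = x ⬝ᵥ K *ᵥ x := by
  calc ∑ z, sym2Coeff K z * (z.map x).mul
      = ∑ z, ∑ p : n × n with s(p.1, p.2) = z, K p.1 p.2 * (s(p.1, p.2).map x).mul := by
        refine Finset.sum_congr rfl fun z _ => ?_
        rw [sym2Coeff, Finset.sum_mul]
        exact Finset.sum_congr rfl fun p hp => by rw [(Finset.mem_filter.mp hp).2]
    _ = ∑ p : n × n, K p.1 p.2 * (s(p.1, p.2).map x).mul :=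
        Finset.sum_fiberwise _ _ _
    _ = x ⬝ᵥ K *ᵥ x := by
        simp only [Fintype.sum_prod_type, dotProduct, mulVec, Finset.mul_sum, Sym2.map_mk,
          Sym2.mul_mk]
        exact Finset.sum_congr rfl fun i _ => Finset.sum_congr rfl fun j _ => by ring

end Sym2Coeff

section GaussianStatistic

variable {d : ℕ}

def gaussianStat (x : Fin d → ℝ) : Sym2 (Fin d) ⊕ Unit → ℝ :=
  Sum.elim (fun z => (z.map x).mul) 1

noncomputable def gaussianNatParam (K : Matrix (Fin d) (Fin d) ℝ) : Sym2 (Fin d) ⊕ Unit → ℝ :=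
  Sum.elim (fun z => -(1 / 2) * sym2Coeff K z) fun _ => log (√K.det)

theorem measurable_gaussianStat : Measurable (gaussianStat (d := d)) := by
  refine measurable_pi_lambda _ fun i => ?_
  rcases i with z | _
  · induction z using Sym2.ind with
    | h i j => exact (measurable_pi_apply i).mul (measurable_pi_apply j)
  · exact measurable_const

theorem gaussianDensityPrec_eq_mul_exp {K : Matrix (Fin d) (Fin d) ℝ} (hK : 0 < K.det)
    (x : Fin d → ℝ) :
    gaussianDensityPrec K x =
      (2 * π) ^ (-(d : ℝ) / 2) * exp (gaussianNatParam K ⬝ᵥ gaussianStat x) := by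
  rw [gaussianDensityPrec, ← sum_sym2Coeff_mul, gaussianNatParam, gaussianStat,
    sumElim_dotProduct_sumElim, exp_add]
  have hquad : (fun z => -(1 / 2) * sym2Coeff K z) ⬝ᵥ (fun z => (z.map x).mul) =
      -(1 / 2) * ∑ z, sym2Coeff K z * (z.map x).mul := by
    simp only [dotProduct, Finset.mul_sum, mul_assoc]
  have hlog : (fun _ => log √K.det) ⬝ᵥ (1 : Unit → ℝ) = log √K.det := by
    simp [dotProduct]
  rw [hquad, hlog, exp_log (sqrt_pos.mpr hK)]
  ring

end GaussianStatistic

theorem card_prod_sym2_sum_unit (ρ d : ℕ) :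
    Fintype.card (Fin ρ × (Sym2 (Fin d) ⊕ Unit)) = ρ * (d * (d + 1) / 2 + 1) := by
  simp [Sym2.card, Nat.choose_two_right, Nat.mul_comm]

/-- The family of piecewise Gaussian densities over a fixed measurable partition
`A 1, …, A ρ` of `ℝ^d` is an exponential family: with `k = ρ (d(d+1)/2 + 1)` there is a
fixed measurable sufficient statistic `T : ℝ^d → ℝ^k` and base function
`h(x) = (2π)^(-d/2)` such that for every choice of positive definite precision matrices
`K 1, …, K ρ` and every `Z > 0` there are a natural parameter `η ∈ ℝ^k` and `ψ ∈ ℝ` with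
`g(x) = (1/Z) ∑ r, f_{K r}(x) 1_{A r}(x) = h(x) exp(⟨η, T(x)⟩ - ψ)` for all `x`. -/
theorem piecewiseGaussian_exponentialFamily {d ρ : ℕ}
    (A : Fin ρ → Set (Fin d → ℝ))
    (hAmeas : ∀ r, MeasurableSet (A r))
    (hAdisj : Pairwise (Function.onFun Disjoint A))
    (hAcover : (⋃ r, A r) = Set.univ) :
    ∃ T : (Fin d → ℝ) → (Fin (ρ * (d * (d + 1) / 2 + 1)) → ℝ), Measurable T ∧
      ∀ (K : Fin ρ → Matrix (Fin d) (Fin d) ℝ), (∀ r, (K r).PosDef) →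
        ∀ Z : ℝ, 0 < Z →
          ∃ (η : Fin (ρ * (d * (d + 1) / 2 + 1)) → ℝ) (ψ : ℝ),
            ∀ x : Fin d → ℝ,
              (1 / Z) * ∑ r, (A r).indicator (gaussianDensityPrec (K r)) x =
                (2 * π) ^ (-(d : ℝ) / 2) * Real.exp (η ⬝ᵥ T x - ψ) := by
  let e := Fintype.equivFinOfCardEq (card_prod_sym2_sum_unit ρ d)
  refine ⟨fun x => piecewiseStat A gaussianStat x ∘ e.symm,
    measurable_pi_lambda _ fun i =>
      (measurable_pi_apply _).comp (measurable_piecewiseStat hAmeas measurable_gaussianStat),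
    fun K hK Z hZ => ⟨Function.uncurry (fun r => gaussianNatParam (K r)) ∘ e.symm, log Z,
      fun x => ?_⟩⟩
  have hdensity : ∀ r, gaussianDensityPrec (K r) =
      fun y => (2 * π) ^ (-(d : ℝ) / 2) * exp (gaussianNatParam (K r) ⬝ᵥ gaussianStat y) :=
    fun r => funext (gaussianDensityPrec_eq_mul_exp (hK r).det_pos)
  simp only [hdensity]
  rw [sum_indicator_mul_exp_dotProduct hAdisj hAcover, comp_equiv_dotProduct_comp_equiv,
    exp_sub, exp_log hZ]
  ring
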